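/- arXiv:2005.00428 — 3 statements merged into one kernel-verified Lean document; each statement's English description precedes it below -/
import Mathlib

section
/- Let G be a group and let F be a countable subgroup of G. Suppose that for every group Γ generated by at most two elements there exists a normal subgroup N of G such that Γ embeds into the image of F under the quotient homomorphism G → G/N. Then G has uncountably many normal subgroups, i.e. the set of normal subgroups of G is uncountable. -/
/-!
If `G` had only countably many normal subgroups, so would the free group `F₂ = FreeGroup Bool`.
Indeed, for a normal `K ◁ F₂` the two-generated group `F₂ ⧸ K` embeds into the image of `F` in
some `G ⧸ N`; lifting the images of the generators to `g : Bool → F` exhibits `K` as the preimage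
of `N` under `F₂ → G`, `of i ↦ g i`, so `K` is determined by the pair `(N, g)`, which ranges over
a countable set. But `F₂` has uncountably many normal subgroups: let `of true` act on `ℤ` by the
shift and `of false` by the transposition `(0, m + 1)`. The commutator of `of false` with its
conjugate by `of true ^ (n + 1)` then acts as the commutator of the transpositions `(0, m + 1)`
and `(n + 1, n + m + 2)`, which is trivial iff `m ≠ n`. Hence intersecting the kernels of these
actions over `m ∉ S` gives distinct normal subgroups for distinct `S ⊆ ℕ`.
-/

open Equiv Function
open scoped commutatorElement

namespace FreeGroup

def shiftSwapRep (m : ℕ) : FreeGroup Bool →* Perm ℤ :=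
  lift fun i => if i then Equiv.addLeft 1 else swap 0 ((m : ℤ) + 1)

def conjCommutatorWord (n : ℕ) : FreeGroup Bool :=
  ⁅of false, of true ^ (n + 1) * of false * (of true ^ (n + 1))⁻¹⁆

theorem shiftSwapRep_conjCommutatorWord (m n : ℕ) :
    shiftSwapRep m (conjCommutatorWord n) =
      ⁅swap 0 ((m : ℤ) + 1), swap ((n : ℤ) + 1) ((n : ℤ) + m + 2)⁆ := by
  have hshift : Equiv.addLeft (1 : ℤ) ^ (n + 1) = Equiv.addLeft ((n : ℤ) + 1) := by
    rw [nsmul_addLeft, nsmul_one]; push_cast; rfl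
  have hconj : swap ((n : ℤ) + 1) ((n : ℤ) + m + 2) =
      Equiv.addLeft ((n : ℤ) + 1) * swap 0 ((m : ℤ) + 1) *
        (Equiv.addLeft ((n : ℤ) + 1))⁻¹ := by
    rw [← swap_apply_apply]
    congr 1
    simp only [coe_addLeft]
    ring
  simp [conjCommutatorWord, shiftSwapRep, map_commutatorElement, hshift, hconj]

theorem shiftSwapRep_conjCommutatorWord_eq_one_iff {m n : ℕ} :
    shiftSwapRep m (conjCommutatorWord n) = 1 ↔ m ≠ n := by
  rw [shiftSwapRep_conjCommutatorWord, commutatorElement_eq_one_iff_commute]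
  constructor
  · rintro hcomm rfl
    have h := congr($hcomm ((m : ℤ) + 1))
    simp only [Perm.mul_apply, swap_apply_def] at h
    split_ifs at h <;> omega
  · intro hmn
    have : (m : ℤ) ≠ n := by exact_mod_cast hmn
    exact (Perm.disjoint_swap_swap (by simp; omega)).commute

def shiftSwapKernel (S : Set ℕ) : Subgroup (FreeGroup Bool) :=
  (MonoidHom.pi fun m : ↥Sᶜ => shiftSwapRep m).ker

theorem conjCommutatorWord_mem_shiftSwapKernel_iff {S : Set ℕ} {n : ℕ} :
    conjCommutatorWord n ∈ shiftSwapKernel S ↔ n ∈ S := by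
  simp only [shiftSwapKernel, MonoidHom.mem_ker, funext_iff, MonoidHom.pi_apply, Pi.one_apply,
    shiftSwapRep_conjCommutatorWord_eq_one_iff, Subtype.forall, Set.mem_compl_iff]
  exact ⟨fun h => by_contra fun hn => h n hn rfl, fun hn m hm h => hm (h ▸ hn)⟩

theorem shiftSwapKernel_injective : Injective shiftSwapKernel := fun S T hST =>
  Set.ext fun n => by
    rw [← conjCommutatorWord_mem_shiftSwapKernel_iff, hST,
      conjCommutatorWord_mem_shiftSwapKernel_iff]

theorem not_countable_setOf_normal_bool :
    ¬ {K : Subgroup (FreeGroup Bool) | K.Normal}.Countable := by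
  intro hc
  have hpre : shiftSwapKernel ⁻¹' {K | K.Normal} = Set.univ :=
    Set.eq_univ_of_forall fun S => MonoidHom.normal_ker _
  have : Countable (Set ℕ) := by
    rw [← Set.countable_univ_iff, ← hpre]
    exact hc.preimage shiftSwapKernel_injective
  obtain ⟨f, hf⟩ := exists_injective_nat (Set ℕ)
  exact cantor_injective f hf

theorem exists_closure_pair_eq_top_of_surjective {Γ : Type*} [Group Γ]
    (f : FreeGroup Bool →* Γ) (hf : Surjective f) :
    ∃ a b : Γ, Subgroup.closure {a, b} = ⊤ := by
  refine ⟨f (of true), f (of false), ?_⟩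
  have hrange : Set.range (of : Bool → FreeGroup Bool) = {of true, of false} := by
    ext; simp [or_comm]
  rw [← Set.image_pair, ← MonoidHom.map_closure, ← hrange, closure_range_of,
    Subgroup.map_top_of_surjective f hf]

theorem exists_eq_comap_lift_of_injective_quotient {G α : Type*} [Group G] {F N : Subgroup G}
    [N.Normal] {K : Subgroup (FreeGroup α)} [K.Normal] (φ : FreeGroup α ⧸ K →* G ⧸ N)
    (hφ : Injective φ) (hF : ∀ x, φ x ∈ F.map (QuotientGroup.mk' N)) :
    ∃ g : α → F, K = N.comap (lift (F.subtype ∘ g)) := by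
  choose g hgF hg using fun a => Subgroup.mem_map.mp (hF (QuotientGroup.mk (of a)))
  refine ⟨fun a => ⟨g a, hgF a⟩, ?_⟩
  have hcomp : (QuotientGroup.mk' N).comp (lift (F.subtype ∘ fun a => ⟨g a, hgF a⟩)) =
      φ.comp (QuotientGroup.mk' K) := ext_hom _ _ fun a => by simpa using hg a
  rw [← QuotientGroup.ker_mk' N, MonoidHom.comap_ker, hcomp, ← MonoidHom.comap_ker,
    (MonoidHom.ker_eq_bot_iff φ).mpr hφ, MonoidHom.comap_bot, QuotientGroup.ker_mk']

end FreeGroup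

/-- Let `F` be a countable subgroup of a group `G`. If every group generated by at
most two elements embeds into the image of `F` in some quotient of `G` by a normal
subgroup, then `G` has uncountably many normal subgroups. -/
theorem uncountably_many_normal_subgroups {G : Type*} [Group G]
    (F : Subgroup G) (hF : Countable F)
    (h : ∀ (Γ : Type) [Group Γ], (∃ a b : Γ, Subgroup.closure {a, b} = ⊤) →
      ∃ N : Subgroup G, ∃ hN : N.Normal,
        haveI := hN
        ∃ φ : Γ →* G ⧸ N, Function.Injective φ ∧
          ∀ γ : Γ, φ γ ∈ F.map (QuotientGroup.mk' N)) :
    ¬ Set.Countable {N : Subgroup G | N.Normal} := by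
  intro hc
  apply FreeGroup.not_countable_setOf_normal_bool
  have hgen : (Set.univ : Set (Bool → F)).Countable := Set.countable_univ
  refine (hc.image2 hgen fun N g => N.comap (FreeGroup.lift (F.subtype ∘ g))).mono ?_
  intro K (hK : K.Normal)
  obtain ⟨N, hN, φ, hφ, hφF⟩ :=
    h _ (FreeGroup.exists_closure_pair_eq_top_of_surjective _ (QuotientGroup.mk'_surjective K))
  obtain ⟨g, rfl⟩ := FreeGroup.exists_eq_comap_lift_of_injective_quotient φ hφ hφF
  exact ⟨N, hN, g, trivial, rfl⟩
end

section
/- Let E be a set, let A be a subset of E, and let Y be a subset of E. Let G be a group of bijections of E such that every g ∈ G satisfies g(Y) = Y and such that for every g ∈ G the two sets {x ∈ Y ∩ A : g(x) ∉ A} and {x ∈ Y, x ∉ A : g(x) ∈ A} are finite. Then the map φ : G → ℤ defined by φ(g) = |{x ∈ Y ∩ A : g(x) ∉ A}| − |{x ∈ Y, x ∉ A : g(x) ∈ A}| is a group homomorphism. -/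
/-!
Write `B = Y ∩ A` and `d(X, Z) = |X \ Z| - |Z \ X|` for sets with finite symmetric difference.
Since `g` preserves `Y`, `φ(g) = d(B, g⁻¹ B)`. On such sets `d` is a
cocycle, `d(X, W) = d(X, Z) + d(Z, W)`, because after intersecting with a common finite set it
is just `|X| - |Z|`; and it is invariant under preimages by bijections. Hence
`d(B, (gh)⁻¹ B) = d(B, h⁻¹ B) + d(h⁻¹ B, h⁻¹ g⁻¹ B) = φ(h) + φ(g)`.
-/

open Set

/-- The flux of `g` with respect to the subset `A`, restricted to `Y`: the number of
points of `Y ∩ A` moved out of `A` by `g` minus the number of points of `Y \ A`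
moved into `A` by `g`. -/
noncomputable def fluxMap {E : Type*} (A Y : Set E) (G : Subgroup (Equiv.Perm E))
    (g : G) : ℤ :=
  ({x | x ∈ Y ∧ x ∈ A ∧ (g : Equiv.Perm E) x ∉ A}.ncard : ℤ) -
  ({x | x ∈ Y ∧ x ∉ A ∧ (g : Equiv.Perm E) x ∈ A}.ncard : ℤ)

noncomputable def sdiffIndex {E : Type*} (X Z : Set E) : ℤ :=
  ((X \ Z).ncard : ℤ) - (Z \ X).ncard

section sdiffIndex

variable {E : Type*}

theorem cast_ncard_sdiff_sub_cast_ncard_sdiff {s t : Set E} (hs : s.Finite) (ht : t.Finite) :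
    ((s \ t).ncard : ℤ) - (t \ s).ncard = s.ncard - t.ncard := by
  rw [← ncard_inter_add_ncard_sdiff_eq_ncard s t hs,
    ← ncard_inter_add_ncard_sdiff_eq_ncard t s ht, inter_comm]
  push_cast
  ring

theorem sdiffIndex_eq_of_sdiff_subset {X Z F : Set E} (hF : F.Finite) (hXZ : X \ Z ⊆ F)
    (hZX : Z \ X ⊆ F) : sdiffIndex X Z = (X ∩ F).ncard - (Z ∩ F).ncard := by
  have restrict : ∀ {P Q : Set E}, P \ Q ⊆ F → P \ Q = (P ∩ F) \ (Q ∩ F) := fun hPQ ↦ by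
    ext x
    exact ⟨fun hx ↦ ⟨⟨hx.1, hPQ hx⟩, fun hq ↦ hx.2 hq.1⟩,
      fun hx ↦ ⟨hx.1.1, fun hq ↦ hx.2 ⟨hq, hx.1.2⟩⟩⟩
  rw [sdiffIndex, restrict hXZ, restrict hZX]
  exact cast_ncard_sdiff_sub_cast_ncard_sdiff (hF.inter_of_right X) (hF.inter_of_right Z)

theorem sdiffIndex_add {X Z W : Set E} (hXZ : (X \ Z).Finite) (hZX : (Z \ X).Finite)
    (hZW : (Z \ W).Finite) (hWZ : (W \ Z).Finite) :
    sdiffIndex X Z + sdiffIndex Z W = sdiffIndex X W := by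
  set F := (X \ Z) ∪ (Z \ X) ∪ (Z \ W) ∪ (W \ Z)
  have hF : F.Finite := ((hXZ.union hZX).union hZW).union hWZ
  have hXW : X \ W ⊆ F := fun x hx ↦ by
    by_cases hz : x ∈ Z
    · exact Or.inl (Or.inr ⟨hz, hx.2⟩)
    · exact Or.inl (Or.inl (Or.inl ⟨hx.1, hz⟩))
  have hWX : W \ X ⊆ F := fun x hx ↦ by
    by_cases hz : x ∈ Z
    · exact Or.inl (Or.inl (Or.inr ⟨hz, hx.2⟩))
    · exact Or.inr ⟨hx.1, hz⟩
  rw [sdiffIndex_eq_of_sdiff_subset hF (fun x hx ↦ by simp [F, hx]) (fun x hx ↦ by simp [F, hx]),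
    sdiffIndex_eq_of_sdiff_subset hF (fun x hx ↦ by simp [F, hx]) (fun x hx ↦ by simp [F, hx]),
    sdiffIndex_eq_of_sdiff_subset hF hXW hWX]
  ring

theorem Equiv.ncard_preimage {α : Type*} (e : α ≃ E) (s : Set E) : (e ⁻¹' s).ncard = s.ncard :=
  ncard_preimage_of_injective_subset_range e.injective (by simp)

theorem sdiffIndex_preimage {α : Type*} (e : α ≃ E) (X Z : Set E) :
    sdiffIndex (e ⁻¹' X) (e ⁻¹' Z) = sdiffIndex X Z := by
  simp only [sdiffIndex, ← preimage_sdiff, Equiv.ncard_preimage]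

end sdiffIndex

section flux

variable {E : Type*} (A Y : Set E)

theorem setOf_mem_out_eq_sdiff (σ : E → E) :
    {x | x ∈ Y ∧ x ∈ A ∧ σ x ∉ A} = (Y ∩ A) \ (Y ∩ σ ⁻¹' A) := by
  ext x
  simp only [mem_ofPred_eq, mem_sdiff, mem_inter_iff, mem_preimage]
  tauto

theorem setOf_mem_in_eq_sdiff (σ : E → E) :
    {x | x ∈ Y ∧ x ∉ A ∧ σ x ∈ A} = (Y ∩ σ ⁻¹' A) \ (Y ∩ A) := by
  ext x
  simp only [mem_ofPred_eq, mem_sdiff, mem_inter_iff, mem_preimage]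
  tauto

theorem fluxMap_eq_sdiffIndex (G : Subgroup (Equiv.Perm E)) (g : G) :
    fluxMap A Y G g = sdiffIndex (Y ∩ A) (Y ∩ (g : Equiv.Perm E) ⁻¹' A) := by
  rw [fluxMap, sdiffIndex, setOf_mem_out_eq_sdiff, setOf_mem_in_eq_sdiff]

end flux

/-- Let `E` be a set, `A, Y ⊆ E`, and let `G` be a group of bijections of `E`, each
preserving `Y`, such that for every `g ∈ G` the sets `{x ∈ Y ∩ A : g x ∉ A}` and
`{x ∈ Y \ A : g x ∈ A}` are finite. Then `g ↦ |{x ∈ Y ∩ A : g x ∉ A}| - |{x ∈ Y \ A : g x ∈ A}|`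
is a group homomorphism `G → ℤ`. -/
theorem fluxMap_mul {E : Type*} (A Y : Set E) (G : Subgroup (Equiv.Perm E))
    (hY : ∀ g : G, (g : Equiv.Perm E) '' Y = Y)
    (hfin1 : ∀ g : G, {x | x ∈ Y ∧ x ∈ A ∧ (g : Equiv.Perm E) x ∉ A}.Finite)
    (hfin2 : ∀ g : G, {x | x ∈ Y ∧ x ∉ A ∧ (g : Equiv.Perm E) x ∈ A}.Finite) :
    ∀ g h : G, fluxMap A Y G (g * h) = fluxMap A Y G g + fluxMap A Y G h := by
  intro g h
  have hYh : (h : Equiv.Perm E) ⁻¹' Y = Y := by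
    have := (h : Equiv.Perm E).injective.preimage_image Y
    rwa [hY h] at this
  have hh : Y ∩ (h : Equiv.Perm E) ⁻¹' A = (h : Equiv.Perm E) ⁻¹' (Y ∩ A) := by
    rw [preimage_inter, hYh]
  have hgh : Y ∩ ((g * h : G) : Equiv.Perm E) ⁻¹' A
      = (h : Equiv.Perm E) ⁻¹' (Y ∩ (g : Equiv.Perm E) ⁻¹' A) := by
    rw [preimage_inter, hYh]
    rfl
  rw [fluxMap_eq_sdiffIndex, fluxMap_eq_sdiffIndex, fluxMap_eq_sdiffIndex, hgh, hh,
    ← sdiffIndex_preimage (h : Equiv.Perm E) (Y ∩ A) (Y ∩ (g : Equiv.Perm E) ⁻¹' A), add_comm]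
  refine (sdiffIndex_add ?_ ?_ ?_ ?_).symm
  · rw [← hh, ← setOf_mem_out_eq_sdiff]
    exact hfin1 h
  · rw [← hh, ← setOf_mem_in_eq_sdiff]
    exact hfin2 h
  · rw [← preimage_sdiff, ← setOf_mem_out_eq_sdiff]
    exact (hfin1 g).preimage (h : Equiv.Perm E).injective.injOn
  · rw [← preimage_sdiff, ← setOf_mem_in_eq_sdiff]
    exact (hfin2 g).preimage (h : Equiv.Perm E).injective.injOn
end

section
/- Let G be a topological group acting continuously by isometries on a metric space X. Suppose H is a subset of G all of whose orbits in X have finite diameter, N is a subset of G contained in the topological closure of H in G, and T is a subset of G such that every element of G can be written as a product n·t with n ∈ N and t ∈ T. If all T-orbits in X have finite diameter, then all G-orbits in X have finite diameter. -/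
open Bornology Metric Pointwise

theorem Bornology.IsBounded.image_of_subset_closure {α X : Type*} [TopologicalSpace α]
    [PseudoMetricSpace X] {f : α → X} (hf : Continuous f) {s t : Set α}
    (hs : IsBounded (f '' s)) (hts : t ⊆ closure s) : IsBounded (f '' t) :=
  hs.closure.subset ((Set.image_mono hts).trans (image_closure_subset_closure_image hf))

theorem isBounded_image_smul_mul {M X : Type*} [Monoid M] [PseudoMetricSpace X] [MulAction M X]
    [IsIsometricSMul M X] {s t : Set M} {x : X} (hs : IsBounded ((· • x) '' s))
    (ht : IsBounded ((· • x) '' t)) : IsBounded ((· • x) '' (s * t)) := by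
  obtain ⟨rs, hrs⟩ := hs.subset_closedBall x
  obtain ⟨rt, hrt⟩ := ht.subset_closedBall x
  refine (isBounded_closedBall (x := x) (r := rt + rs)).subset ?_
  rintro _ ⟨_, ⟨a, ha, b, hb, rfl⟩, rfl⟩
  calc dist ((a * b) • x) x ≤ dist (a • b • x) (a • x) + dist (a • x) x := by
        rw [mul_smul]; exact dist_triangle _ _ _
    _ = dist (b • x) x + dist (a • x) x := by rw [dist_smul]
    _ ≤ rt + rs := add_le_add (hrt ⟨b, hb, rfl⟩) (hrs ⟨a, ha, rfl⟩)

theorem all_orbits_isBounded_general {G X : Type*} [Group G] [TopologicalSpace G]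
    [MetricSpace X] [MulAction G X] [ContinuousSMul G X]
    (hiso : ∀ g : G, Isometry (fun y : X => g • y))
    (H N T : Set G)
    (hH : ∀ x : X, Bornology.IsBounded ((fun g : G => g • x) '' H))
    (hN : N ⊆ closure H)
    (hdec : ∀ g : G, ∃ n ∈ N, ∃ t ∈ T, g = n * t)
    (hT : ∀ x : X, Bornology.IsBounded ((fun g : G => g • x) '' T)) :
    ∀ x : X, Bornology.IsBounded (Set.range (fun g : G => g • x)) := by
  intro x
  have : IsIsometricSMul G X := ⟨hiso⟩
  have hNx : IsBounded ((· • x) '' N) :=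
    (hH x).image_of_subset_closure (continuous_id.smul continuous_const) hN
  refine (isBounded_image_smul_mul hNx (hT x)).subset ?_
  rintro _ ⟨g, rfl⟩
  obtain ⟨n, hn, t, ht, rfl⟩ := hdec g
  exact ⟨n * t, Set.mul_mem_mul hn ht, rfl⟩

/-- Let `G` be a topological group acting continuously by isometries on a metric
space `X`. Suppose `H ⊆ G` has all orbits of finite diameter, `N ⊆ G` is contained
in the closure of `H`, and `T ⊆ G` is such that every element of `G` is a product
`n * t` with `n ∈ N`, `t ∈ T`. If all `T`-orbits have finite diameter, then all
`G`-orbits in `X` have finite diameter. -/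
theorem all_orbits_isBounded {G X : Type*} [Group G] [TopologicalSpace G]
    [IsTopologicalGroup G] [MetricSpace X] [MulAction G X] [ContinuousSMul G X]
    (hiso : ∀ g : G, Isometry (fun y : X => g • y))
    (H N T : Set G)
    (hH : ∀ x : X, Bornology.IsBounded ((fun g : G => g • x) '' H))
    (hN : N ⊆ closure H)
    (hdec : ∀ g : G, ∃ n ∈ N, ∃ t ∈ T, g = n * t)
    (hT : ∀ x : X, Bornology.IsBounded ((fun g : G => g • x) '' T)) :
    ∀ x : X, Bornology.IsBounded (Set.range (fun g : G => g • x)) :=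
  all_orbits_isBounded_general hiso H N T hH hN hdec hT
end
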